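/- Let z₁, z₂ be standard Gaussians with correlation ρ ∈ (−1,1), and let a, b ∈ ℝ. Define T₁ = exp(−a²/2)·Φ((ρa−b)/√(1−ρ²)) and T₂ = exp(−b²/2)·Φ((ρb−a)/√(1−ρ²)). Then E[z₁ · 1{z₁ ≥ a, z₂ ≥ b}] = (1/√(2π))·(T₁ + ρT₂). -/

import Mathlib

open MeasureTheory Real

/-- The standard normal probability density function. -/
noncomputable def stdGaussianPDF (t : ℝ) : ℝ :=
  (Real.sqrt (2 * Real.pi))⁻¹ * Real.exp (-t ^ 2 / 2)

/-- The standard normal cumulative distribution function. -/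
noncomputable def stdNormalCDF (x : ℝ) : ℝ :=
  ∫ t in Set.Iic x, stdGaussianPDF t

/-- Density of the bivariate standard Gaussian with correlation `ρ`. -/
noncomputable def bivStdGaussianPDF (ρ x y : ℝ) : ℝ :=
  (2 * Real.pi * Real.sqrt (1 - ρ ^ 2))⁻¹ *
    Real.exp (-(x ^ 2 - 2 * ρ * x * y + y ^ 2) / (2 * (1 - ρ ^ 2)))

/-!
Since `x = (x - ρy)/(1 - ρ²) + ρ (y - ρx)/(1 - ρ²)` and
`(y - ρx)/(1 - ρ²) φ_ρ(x, y) = -∂_y φ_ρ(x, y)` (and symmetrically with `x` and `y` exchanged),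
the integrand is a combination of two partial derivatives of the density. Integrating each in its
own variable over the half-line leaves the density on a boundary line, e.g.
`∫_{y ≥ b} φ_ρ(a, y) dy`, which is `φ(a)` times a Gaussian tail because conditionally on `z₁ = a`
the variable `z₂` is `N(ρa, 1 - ρ²)`.
-/

open Set Filter Topology

/-- Minus the score `∂_y log φ_ρ(x, y)`. -/
noncomputable def bivStdGaussianScore (ρ x y : ℝ) : ℝ :=
  (y - ρ * x) / (1 - ρ ^ 2)

lemma stdGaussianPDF_neg (t : ℝ) : stdGaussianPDF (-t) = stdGaussianPDF t := by
  simp only [stdGaussianPDF, neg_sq]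

lemma bivStdGaussianPDF_comm (ρ x y : ℝ) :
    bivStdGaussianPDF ρ x y = bivStdGaussianPDF ρ y x := by
  unfold bivStdGaussianPDF
  ring_nf

lemma setIntegral_Ici_stdGaussianPDF_affine {σ : ℝ} (hσ : 0 < σ) (μ c : ℝ) :
    ∫ y in Ici c, σ⁻¹ * stdGaussianPDF ((y - μ) / σ) = stdNormalCDF ((μ - c) / σ) := by
  have himage : (fun t => μ - σ * t) '' Iic ((μ - c) / σ) = Ici c := by
    ext y
    simp only [mem_image, mem_Iic, mem_Ici]
    constructor
    · rintro ⟨t, ht, rfl⟩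
      have := mul_le_mul_of_nonneg_left ht hσ.le
      rw [mul_div_cancel₀ _ hσ.ne'] at this
      linarith
    · intro hy
      refine ⟨(μ - y) / σ, div_le_div_of_nonneg_right (by linarith) hσ.le, ?_⟩
      field_simp
      ring
  have hderiv : ∀ t ∈ Iic ((μ - c) / σ),
      HasDerivWithinAt (fun t => μ - σ * t) (-σ) (Iic ((μ - c) / σ)) t := fun t _ => by
    simpa using (((hasDerivAt_id t).const_mul σ).const_sub μ).hasDerivWithinAt
  have hinj : InjOn (fun t => μ - σ * t) (Iic ((μ - c) / σ)) := fun t₁ _ t₂ _ h =>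
    mul_left_cancel₀ hσ.ne' (sub_right_injective h)
  rw [← himage, integral_image_eq_integral_abs_deriv_smul measurableSet_Iic hderiv hinj]
  refine setIntegral_congr_fun measurableSet_Iic fun t _ => ?_
  have : (μ - σ * t - μ) / σ = -t := by field_simp; ring
  rw [this, stdGaussianPDF_neg, abs_neg, abs_of_pos hσ, smul_eq_mul, mul_inv_cancel_left₀ hσ.ne']

section

variable {ρ : ℝ}

/-- Conditionally on `z₁ = x`, `z₂` is `N(ρx, 1 - ρ²)`. -/
lemma bivStdGaussianPDF_eq_mul (hρ : 0 < 1 - ρ ^ 2) (x y : ℝ) :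
    bivStdGaussianPDF ρ x y = stdGaussianPDF x *
      ((√(1 - ρ ^ 2))⁻¹ * stdGaussianPDF ((y - ρ * x) / √(1 - ρ ^ 2))) := by
  have hσ : √(1 - ρ ^ 2) ^ 2 = 1 - ρ ^ 2 := sq_sqrt hρ.le
  have h2π : √(2 * π) ^ 2 = 2 * π := sq_sqrt (by positivity)
  have hexp : exp (-(x ^ 2 - 2 * ρ * x * y + y ^ 2) / (2 * (1 - ρ ^ 2))) =
      exp (-x ^ 2 / 2) * exp (-((y - ρ * x) / √(1 - ρ ^ 2)) ^ 2 / 2) := by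
    rw [← exp_add, div_pow, hσ]
    congr 1
    field_simp
    ring
  unfold bivStdGaussianPDF stdGaussianPDF
  rw [hexp]
  field_simp
  rw [h2π]

lemma setIntegral_Ici_bivStdGaussianPDF_right (hρ : 0 < 1 - ρ ^ 2) (x c : ℝ) :
    ∫ y in Ici c, bivStdGaussianPDF ρ x y =
      stdGaussianPDF x * stdNormalCDF ((ρ * x - c) / √(1 - ρ ^ 2)) := by
  simp_rw [bivStdGaussianPDF_eq_mul hρ x]
  rw [integral_const_mul, setIntegral_Ici_stdGaussianPDF_affine (sqrt_pos.mpr hρ)]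

lemma bivStdGaussianPDF_le (hρ : 0 < 1 - ρ ^ 2) (x y : ℝ) :
    bivStdGaussianPDF ρ x y ≤
      (2 * π * √(1 - ρ ^ 2))⁻¹ * (exp (-(1 / 4) * x ^ 2) * exp (-(1 / 4) * y ^ 2)) := by
  unfold bivStdGaussianPDF
  rw [← exp_add]
  gcongr
  rw [div_le_iff₀ (by positivity)]
  -- `2 (x² - 2ρxy + y²) - (1 - ρ²)(x² + y²) = (ρx - y)² + (x - ρy)²`
  nlinarith [sq_nonneg (ρ * x - y), sq_nonneg (x - ρ * y)]

lemma abs_bivStdGaussianScore_le (hρ : 0 < 1 - ρ ^ 2) (x y : ℝ) :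
    |bivStdGaussianScore ρ x y| ≤ (1 - ρ ^ 2)⁻¹ * ((|x| + 1) * (|y| + 1)) := by
  have hρ₁ : |ρ| ≤ 1 := by nlinarith [sq_abs ρ, abs_nonneg ρ]
  rw [bivStdGaussianScore, abs_div, abs_of_pos hρ, div_eq_inv_mul]
  gcongr
  calc |y - ρ * x| ≤ |y| + |ρ| * |x| := by rw [← abs_mul]; exact abs_sub _ _
    _ ≤ (|x| + 1) * (|y| + 1) := by nlinarith [abs_nonneg x, abs_nonneg y]

lemma integrable_abs_add_one_mul_exp_neg_mul_sq {b : ℝ} (hb : 0 < b) :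
    Integrable fun t : ℝ => (|t| + 1) * exp (-b * t ^ 2) := by
  refine ((integrable_mul_exp_neg_mul_sq hb).norm.add (integrable_exp_neg_mul_sq hb)).congr
    (ae_of_all _ fun t => ?_)
  simp only [Pi.add_apply, norm_mul, norm_eq_abs, abs_of_pos (exp_pos _)]
  ring

lemma integrable_mul_bivStdGaussianPDF_right (hρ : 0 < 1 - ρ ^ 2) {g : ℝ → ℝ}
    (hg : Continuous g) {A : ℝ} (hgA : ∀ y, |g y| ≤ A * (|y| + 1)) (x : ℝ) :
    Integrable fun y => g y * bivStdGaussianPDF ρ x y := by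
  set C := (2 * π * √(1 - ρ ^ 2))⁻¹
  refine ((integrable_abs_add_one_mul_exp_neg_mul_sq (b := 1 / 4) (by norm_num)).const_mul
    (A * C * exp (-(1 / 4) * x ^ 2))).mono'
    (hg.mul (by unfold bivStdGaussianPDF; fun_prop)).aestronglyMeasurable
    (ae_of_all _ fun y => ?_)
  rw [norm_mul, norm_eq_abs, norm_of_nonneg (by unfold bivStdGaussianPDF; positivity)]
  calc |g y| * bivStdGaussianPDF ρ x y
      ≤ A * (|y| + 1) * (C * (exp (-(1 / 4) * x ^ 2) * exp (-(1 / 4) * y ^ 2))) :=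
        mul_le_mul (hgA y) (bivStdGaussianPDF_le hρ x y) (by unfold bivStdGaussianPDF; positivity)
          ((abs_nonneg _).trans (hgA y))
    _ = _ := by ring

lemma integrable_mul_bivStdGaussianPDF (hρ : 0 < 1 - ρ ^ 2) {w : ℝ × ℝ → ℝ}
    (hw : Continuous w) {A : ℝ} (hwA : ∀ p, |w p| ≤ A * ((|p.1| + 1) * (|p.2| + 1))) :
    Integrable fun p => w p * bivStdGaussianPDF ρ p.1 p.2 := by
  set C := (2 * π * √(1 - ρ ^ 2))⁻¹
  have hG := integrable_abs_add_one_mul_exp_neg_mul_sq (b := 1 / 4) (by norm_num)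
  rw [Measure.volume_eq_prod]
  refine ((hG.mul_prod hG).const_mul (A * C)).mono'
    (hw.mul (by unfold bivStdGaussianPDF; fun_prop)).aestronglyMeasurable
    (ae_of_all _ fun p => ?_)
  rw [norm_mul, norm_eq_abs, norm_of_nonneg (by unfold bivStdGaussianPDF; positivity)]
  calc |w p| * bivStdGaussianPDF ρ p.1 p.2
      ≤ A * ((|p.1| + 1) * (|p.2| + 1)) *
          (C * (exp (-(1 / 4) * p.1 ^ 2) * exp (-(1 / 4) * p.2 ^ 2))) :=
        mul_le_mul (hwA p) (bivStdGaussianPDF_le hρ p.1 p.2)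
          (by unfold bivStdGaussianPDF; positivity) ((abs_nonneg _).trans (hwA p))
    _ = _ := by ring

lemma hasDerivAt_bivStdGaussianPDF_right (hρ : 0 < 1 - ρ ^ 2) (x y : ℝ) :
    HasDerivAt (bivStdGaussianPDF ρ x)
      (-(bivStdGaussianScore ρ x y * bivStdGaussianPDF ρ x y)) y := by
  have hexponent : HasDerivAt (fun y => -(x ^ 2 - 2 * ρ * x * y + y ^ 2) / (2 * (1 - ρ ^ 2)))
      (-(2 * y - 2 * ρ * x) / (2 * (1 - ρ ^ 2))) y := by
    refine (((((hasDerivAt_id y).const_mul (2 * ρ * x)).const_sub (x ^ 2)).add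
      (hasDerivAt_pow 2 y)).neg.div_const (2 * (1 - ρ ^ 2))).congr_deriv ?_
    norm_num
    ring
  refine (hexponent.exp.const_mul (2 * π * √(1 - ρ ^ 2))⁻¹).congr_deriv ?_
  unfold bivStdGaussianScore bivStdGaussianPDF
  field_simp

lemma integrable_bivStdGaussianScore_mul_right (hρ : 0 < 1 - ρ ^ 2) (x : ℝ) :
    Integrable fun y => bivStdGaussianScore ρ x y * bivStdGaussianPDF ρ x y :=
  integrable_mul_bivStdGaussianPDF_right hρ (by unfold bivStdGaussianScore; fun_prop)
    (fun y => (abs_bivStdGaussianScore_le hρ x y).trans_eq (mul_assoc _ _ _).symm) x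

lemma tendsto_bivStdGaussianPDF_atTop (hρ : 0 < 1 - ρ ^ 2) (x : ℝ) :
    Tendsto (bivStdGaussianPDF ρ x) atTop (𝓝 0) := by
  have hint : Integrable (bivStdGaussianPDF ρ x) := by
    simpa using integrable_mul_bivStdGaussianPDF_right hρ (g := fun _ => 1) continuous_const
      (A := 1) (fun y => by simp) x
  exact tendsto_zero_of_hasDerivAt_of_integrableOn_Ioi (a := 0)
    (fun y _ => hasDerivAt_bivStdGaussianPDF_right hρ x y)
    (integrable_bivStdGaussianScore_mul_right hρ x).neg.integrableOn hint.integrableOn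

lemma setIntegral_Ici_bivStdGaussianScore_mul_right (hρ : 0 < 1 - ρ ^ 2) (x c : ℝ) :
    ∫ y in Ici c, bivStdGaussianScore ρ x y * bivStdGaussianPDF ρ x y =
      bivStdGaussianPDF ρ x c := by
  have := integral_Ioi_of_hasDerivAt_of_tendsto' (a := c)
    (fun y _ => hasDerivAt_bivStdGaussianPDF_right hρ x y)
    (integrable_bivStdGaussianScore_mul_right hρ x).neg.integrableOn
    (tendsto_bivStdGaussianPDF_atTop hρ x)
  rw [integral_Ici_eq_integral_Ioi, ← neg_inj, ← integral_neg, this, zero_sub]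

lemma integrable_bivStdGaussianScore_mul (hρ : 0 < 1 - ρ ^ 2) :
    Integrable fun p : ℝ × ℝ => bivStdGaussianScore ρ p.1 p.2 * bivStdGaussianPDF ρ p.1 p.2 :=
  integrable_mul_bivStdGaussianPDF hρ (by unfold bivStdGaussianScore; fun_prop)
    (fun p => abs_bivStdGaussianScore_le hρ p.1 p.2)

lemma setIntegral_Ici_prod_Ici_bivStdGaussianScore_mul (hρ : 0 < 1 - ρ ^ 2) (a b : ℝ) :
    ∫ p in Ici a ×ˢ Ici b, bivStdGaussianScore ρ p.1 p.2 * bivStdGaussianPDF ρ p.1 p.2 =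
      stdGaussianPDF b * stdNormalCDF ((ρ * b - a) / √(1 - ρ ^ 2)) := by
  rw [Measure.volume_eq_prod,
    setIntegral_prod _ (integrable_bivStdGaussianScore_mul hρ).integrableOn]
  simp_rw [setIntegral_Ici_bivStdGaussianScore_mul_right hρ, bivStdGaussianPDF_comm ρ _ b]
  exact setIntegral_Ici_bivStdGaussianPDF_right hρ b a

end

/-- For a bivariate standard Gaussian `(z₁, z₂)` with correlation `ρ ∈ (−1,1)`:
`E[z₁ 1{z₁ ≥ a, z₂ ≥ b}] = (1/√(2π)) (T₁ + ρ T₂)` where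
`T₁ = exp(−a²/2) Φ((ρa−b)/√(1−ρ²))` and `T₂ = exp(−b²/2) Φ((ρb−a)/√(1−ρ²))`. -/
theorem first_order_truncated_bivariate (a b ρ : ℝ) (hρ : ρ ∈ Set.Ioo (-1 : ℝ) 1) :
    (∫ p in Set.Ici a ×ˢ Set.Ici b, p.1 * bivStdGaussianPDF ρ p.1 p.2) =
      (Real.sqrt (2 * Real.pi))⁻¹ *
        (Real.exp (-a ^ 2 / 2) * stdNormalCDF ((ρ * a - b) / Real.sqrt (1 - ρ ^ 2)) +
          ρ * (Real.exp (-b ^ 2 / 2) *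
            stdNormalCDF ((ρ * b - a) / Real.sqrt (1 - ρ ^ 2)))) := by
  have hρ₂ : 0 < 1 - ρ ^ 2 := by nlinarith [hρ.1, hρ.2]
  set F : ℝ × ℝ → ℝ := fun p => bivStdGaussianScore ρ p.1 p.2 * bivStdGaussianPDF ρ p.1 p.2
  have hF : Integrable F := integrable_bivStdGaussianScore_mul hρ₂
  have hsplit : ∀ p : ℝ × ℝ, p.1 * bivStdGaussianPDF ρ p.1 p.2 = F p.swap + ρ * F p := by
    rintro ⟨x, y⟩
    simp only [F, Prod.fst_swap, Prod.snd_swap, bivStdGaussianScore, bivStdGaussianPDF_comm ρ y x]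
    field_simp
    ring
  have hFswap : Integrable fun p : ℝ × ℝ => F p.swap := hF.swap
  simp_rw [hsplit]
  rw [integral_add hFswap.integrableOn (hF.const_mul ρ).integrableOn, integral_const_mul,
    Measure.volume_eq_prod, setIntegral_prod_swap, ← Measure.volume_eq_prod,
    setIntegral_Ici_prod_Ici_bivStdGaussianScore_mul hρ₂,
    setIntegral_Ici_prod_Ici_bivStdGaussianScore_mul hρ₂]
  simp only [stdGaussianPDF]
  ring
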